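/- arXiv:1711.01050 — 7 statements merged into one kernel-verified Lean document; each statement's English description precedes it below -/
import Mathlib

section
/- Under Assumption 1, the best-response map T is a contraction on ℝ^N with respect to the supremum norm: for all x, y ∈ ℝ^N, ‖T(x) − T(y)‖_∞ ≤ κ · ‖x − y‖_∞, where κ = max_i (Σ_{j=1}^N g_{ij})/(2b_i) satisfies 0 ≤ κ < 1. -/
/-!
Each coordinate of `T` is the positive part of an affine function of `x`. Taking the positive
part is `1`-Lipschitz, and the affine part moves by at most `(Σⱼ gᵢⱼ) / (2bᵢ) · ‖x - y‖∞`
because the weights `gᵢⱼ` are nonnegative. Assumption 1 makes every such ratio `< 1`, and a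
finite supremum of numbers `< 1` is `< 1`.
-/

open Finset

namespace Real

variable {ι : Type*}

lemma iSup_lt_of_finite [Finite ι] {f : ι → ℝ} {a : ℝ} (hf : ∀ i, f i < a) (ha : 0 < a) :
    ⨆ i, f i < a := by
  cases isEmpty_or_nonempty ι
  · simpa [Real.iSup_of_isEmpty] using ha
  · obtain ⟨i, hi⟩ := Finite.exists_max f
    exact (ciSup_le hi).trans_lt (hf i)

end Real

section SupNorm

variable {ι : Type*} [Fintype ι]

lemma abs_sum_mul_le_sum_mul_norm {w : ι → ℝ} (hw : ∀ j, 0 ≤ w j) (v : ι → ℝ) :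
    |∑ j, w j * v j| ≤ (∑ j, w j) * ‖v‖ :=
  calc |∑ j, w j * v j| ≤ ∑ j, |w j * v j| := abs_sum_le_sum_abs _ _
    _ ≤ ∑ j, w j * ‖v‖ := by
        gcongr with j
        rw [abs_mul, abs_of_nonneg (hw j)]
        exact mul_le_mul_of_nonneg_left (norm_le_pi_norm v j) (hw j)
    _ = (∑ j, w j) * ‖v‖ := (sum_mul ..).symm

lemma abs_max_zero_affine_sub_le {w : ι → ℝ} (hw : ∀ j, 0 ≤ w j) {d : ℝ} (hd : 0 < d)
    (s : ℝ) (x y : ι → ℝ) :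
    |max 0 ((s + ∑ j, w j * x j) / d) - max 0 ((s + ∑ j, w j * y j) / d)|
      ≤ (∑ j, w j) / d * ‖x - y‖ := by
  have hdiff : (s + ∑ j, w j * x j) / d - (s + ∑ j, w j * y j) / d
      = (∑ j, w j * (x - y) j) / d := by
    simp only [Pi.sub_apply, mul_sub, sum_sub_distrib]
    ring
  calc _ ≤ |(s + ∑ j, w j * x j) / d - (s + ∑ j, w j * y j) / d| := by
        simpa only [max_comm (0 : ℝ)] using abs_max_sub_max_le_abs
          ((s + ∑ j, w j * x j) / d) ((s + ∑ j, w j * y j) / d) 0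
    _ = |∑ j, w j * (x - y) j| / d := by rw [hdiff, abs_div, abs_of_pos hd]
    _ ≤ (∑ j, w j) * ‖x - y‖ / d := by gcongr; exact abs_sum_mul_le_sum_mul_norm hw _
    _ = (∑ j, w j) / d * ‖x - y‖ := div_mul_eq_mul_div _ _ _ |>.symm

lemma pi_norm_le_iSup_mul {u k : ι → ℝ} (hk : ∀ i, 0 ≤ k i) {m : ℝ} (hm : 0 ≤ m)
    (hu : ∀ i, ‖u i‖ ≤ k i * m) : ‖u‖ ≤ (⨆ i, k i) * m := by
  refine (pi_norm_le_iff_of_nonneg (mul_nonneg (Real.iSup_nonneg hk) hm)).2 fun i => ?_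
  calc ‖u i‖ ≤ k i * m := hu i
    _ ≤ (⨆ i, k i) * m := by gcongr; exact le_ciSup (Finite.bddAbove_range k) i

end SupNorm

theorem stmt2_general (N : ℕ)
    (a b r : Fin N → ℝ) (c : ℝ) (hb : ∀ i, 0 < b i)
    (G : Matrix (Fin N) (Fin N) ℝ)
    (hGnonneg : ∀ i j, 0 ≤ G i j)
    (hA : ∀ i, ∑ j, G i j < 2 * b i)
    (T : (Fin N → ℝ) → (Fin N → ℝ))
    (hT : ∀ x i, T x i = max 0 ((r i - c + a i + ∑ j, G i j * x j) / (2 * b i)))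
    (κ : ℝ) (hκ : κ = ⨆ i, (∑ j, G i j) / (2 * b i)) :
    0 ≤ κ ∧ κ < 1 ∧ ∀ x y : Fin N → ℝ, ‖T x - T y‖ ≤ κ * ‖x - y‖ := by
  have h2b : ∀ i, 0 < 2 * b i := fun i => by linarith [hb i]
  have hratio_nonneg : ∀ i, 0 ≤ (∑ j, G i j) / (2 * b i) := fun i =>
    div_nonneg (sum_nonneg fun j _ => hGnonneg i j) (h2b i).le
  subst hκ
  refine ⟨Real.iSup_nonneg hratio_nonneg,
    Real.iSup_lt_of_finite (fun i => (div_lt_one (h2b i)).2 (hA i)) one_pos, fun x y => ?_⟩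
  refine pi_norm_le_iSup_mul hratio_nonneg (norm_nonneg _) fun i => ?_
  simpa only [Pi.sub_apply, Real.norm_eq_abs, hT] using
    abs_max_zero_affine_sub_le (hGnonneg i) (h2b i) _ x y

/-- Under Assumption 1, the best-response map `T` is a contraction on `ℝ^N` in the
supremum norm, with contraction constant `κ = max_i (Σ_j g_{ij}) / (2 bᵢ)`, `0 ≤ κ < 1`. -/
theorem stmt2 (N : ℕ) (hN : 1 ≤ N)
    (a b r : Fin N → ℝ) (c : ℝ) (hb : ∀ i, 0 < b i)
    (G : Matrix (Fin N) (Fin N) ℝ)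
    (hGsym : ∀ i j, G i j = G j i)
    (hGnonneg : ∀ i j, 0 ≤ G i j)
    (hGdiag : ∀ i, G i i = 0)
    (hA : ∀ i, ∑ j, G i j < 2 * b i)
    (T : (Fin N → ℝ) → (Fin N → ℝ))
    (hT : ∀ x i, T x i = max 0 ((r i - c + a i + ∑ j, G i j * x j) / (2 * b i)))
    (κ : ℝ) (hκ : κ = ⨆ i, (∑ j, G i j) / (2 * b i)) :
    0 ≤ κ ∧ κ < 1 ∧ ∀ x y : Fin N → ℝ, ‖T x - T y‖ ≤ κ * ‖x - y‖ :=
  stmt2_general N a b r c hb G hGnonneg hA T hT κ hκ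
end

section
/- (Theorem 1) Under Assumption 1, there exists exactly one vector x* ∈ ℝ^N satisfying x*_i = max{0, (r_i − c + a_i + Σ_{j=1}^N g_{ij} x*_j)/(2b_i)} for every i; i.e., the Nash equilibrium of the participation subgame exists and is unique. -/
/-!
With `W i j = g i j / (2 b i)` and `e i = (r i - c + a i) / (2 b i)`, the best-response map is
`x ↦ max 0 (e + W x)`. In the sup norm on `ℝ^N`, `W` has operator norm `max_i ∑_j g i j / (2 b i)`,
which Assumption 1 makes `< 1`, and taking positive parts is 1-Lipschitz. So the map is a
contraction of a complete space, and Banach's fixed point theorem gives existence and uniqueness.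
-/

open scoped NNReal Matrix

attribute [local instance] Matrix.linftyOpNormedAddCommGroup

theorem LipschitzWith.of_forall_eval {α ι : Type*} {β : ι → Type*} [PseudoEMetricSpace α]
    [Fintype ι] [∀ i, PseudoEMetricSpace (β i)] {K : ℝ≥0} {f : α → ∀ i, β i}
    (hf : ∀ i, LipschitzWith K fun x => f x i) : LipschitzWith K f :=
  fun x y => edist_pi_le_iff.2 fun i => hf i x y

theorem ContractingWith.existsUnique_isFixedPt {α : Type*} [MetricSpace α] [Nonempty α]
    [CompleteSpace α] {K : ℝ≥0} {f : α → α} (hf : ContractingWith K f) :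
    ∃! x, Function.IsFixedPt f x :=
  ⟨_, hf.fixedPoint_isFixedPt, fun _ hx => hf.fixedPoint_unique hx⟩

namespace Matrix

variable {m n : Type*} [Fintype m] [Fintype n]

theorem lipschitzWith_mulVec (A : Matrix m n ℝ) : LipschitzWith ‖A‖₊ (A *ᵥ ·) :=
  LipschitzWith.of_dist_le_mul fun x y => by
    simpa only [dist_eq_norm, ← mulVec_sub, coe_nnnorm] using linfty_opNorm_mulVec A (x - y)

theorem linfty_opNNNorm_lt_one_of_nonneg {A : Matrix m n ℝ} (h0 : ∀ i j, 0 ≤ A i j)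
    (h1 : ∀ i, ∑ j, A i j < 1) : ‖A‖₊ < 1 := by
  rw [linfty_opNNNorm_def, Finset.sup_lt_iff zero_lt_one]
  intro i _
  rw [← NNReal.coe_lt_coe]
  simpa [abs_of_nonneg (h0 i _)] using h1 i

theorem existsUnique_eq_max_zero_add_mulVec (e : m → ℝ) {A : Matrix m m ℝ} (hA : ‖A‖₊ < 1) :
    ∃! x : m → ℝ, ∀ i, x i = max 0 (e i + (A *ᵥ x) i) := by
  have hT : ContractingWith ‖A‖₊ fun x i => max 0 (e i + (A *ᵥ x) i) := by
    refine ⟨hA, LipschitzWith.of_forall_eval fun i => ?_⟩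
    simpa using ((LipschitzWith.const (e i)).add
      ((LipschitzWith.eval i).comp A.lipschitzWith_mulVec)).const_max 0
  simpa only [Function.IsFixedPt, funext_iff, eq_comm] using hT.existsUnique_isFixedPt

end Matrix

theorem stmt3_general (N : ℕ)
    (a b r : Fin N → ℝ) (c : ℝ) (hb : ∀ i, 0 < b i)
    (G : Matrix (Fin N) (Fin N) ℝ)
    (hGnonneg : ∀ i j, 0 ≤ G i j)
    (hA : ∀ i, ∑ j, G i j < 2 * b i) :
    ∃! x : Fin N → ℝ,
      ∀ i, x i = max 0 ((r i - c + a i + ∑ j, G i j * x j) / (2 * b i)) := by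
  have h2b : ∀ i, 0 < 2 * b i := fun i => by linarith [hb i]
  set W : Matrix (Fin N) (Fin N) ℝ := Matrix.of fun i j => G i j / (2 * b i)
  have hW : ∀ (x : Fin N → ℝ) i, (r i - c + a i + ∑ j, G i j * x j) / (2 * b i)
      = (r i - c + a i) / (2 * b i) + (W *ᵥ x) i := fun x i => by
    simp only [W, Matrix.mulVec, dotProduct, Matrix.of_apply, add_div, Finset.sum_div,
      div_mul_eq_mul_div]
  have hW_lt : ‖W‖₊ < 1 := by
    refine Matrix.linfty_opNNNorm_lt_one_of_nonneg
      (fun i j => div_nonneg (hGnonneg i j) (h2b i).le) fun i => ?_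
    simpa only [W, Matrix.of_apply, ← Finset.sum_div, div_lt_one (h2b i)] using hA i
  simpa only [hW] using Matrix.existsUnique_eq_max_zero_add_mulVec _ hW_lt

/-- Theorem 1: under Assumption 1, there exists exactly one Nash equilibrium of the
participation subgame, i.e. exactly one fixed point of the best-response map. -/
theorem stmt3 (N : ℕ) (hN : 1 ≤ N)
    (a b r : Fin N → ℝ) (c : ℝ) (hb : ∀ i, 0 < b i)
    (G : Matrix (Fin N) (Fin N) ℝ)
    (hGsym : ∀ i j, G i j = G j i)
    (hGnonneg : ∀ i j, 0 ≤ G i j)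
    (hGdiag : ∀ i, G i i = 0)
    (hA : ∀ i, ∑ j, G i j < 2 * b i) :
    ∃! x : Fin N → ℝ,
      ∀ i, x i = max 0 ((r i - c + a i + ∑ j, G i j * x j) / (2 * b i)) :=
  stmt3_general N a b r c hb G hGnonneg hA
end

section
/- (Proposition 1) Under Assumption 1, the simultaneous best-response iteration x^{[k+1]} = T(x^{[k]}), started from any initial point x^{[0]} ∈ ℝ^N, converges to the unique fixed point x* of T; moreover the convergence is geometric: ‖x^{[k]} − x*‖_∞ ≤ κ^k · ‖x^{[0]} − x*‖_∞ for every k, where κ = max_i (Σ_{j=1}^N g_{ij})/(2b_i) < 1. -/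
/-!
Each coordinate of the best response is the positive part of an affine function of `x` whose
nonnegative weights sum to `(Σⱼ gᵢⱼ) / (2bᵢ)`. The positive part is `1`-Lipschitz, so `T` is
`κ`-Lipschitz for the sup norm, and Assumption 1 gives `κ < 1`. The geometric bound is the
Lipschitz bound of `T^[k]` at the fixed point, and convergence is Banach's fixed-point theorem.
-/

open Finset
open scoped NNReal

theorem Real.iSup_lt_of_forall_lt {ι : Type*} [Finite ι] {f : ι → ℝ} {a : ℝ} (ha : 0 < a)
    (hf : ∀ i, f i < a) : ⨆ i, f i < a := by
  rcases isEmpty_or_nonempty ι with hι | hι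
  · simpa using ha
  · obtain ⟨i, hi⟩ := Finite.exists_max f
    exact (ciSup_le hi).trans_lt (hf i)

section BestResponse

variable {ι : Type*} [Fintype ι]

noncomputable def bestResponse (d s : ι → ℝ) (G : Matrix ι ι ℝ) (x : ι → ℝ) : ι → ℝ :=
  fun i => max 0 ((d i + ∑ j, G i j * x j) / s i)

theorem abs_weightedSum_sub_le {w : ι → ℝ} (hw : ∀ j, 0 ≤ w j) (x y : ι → ℝ) :
    |∑ j, w j * x j - ∑ j, w j * y j| ≤ (∑ j, w j) * ‖x - y‖ := by
  rw [← sum_sub_distrib, sum_mul]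
  refine (abs_sum_le_sum_abs _ _).trans (sum_le_sum fun j _ => ?_)
  rw [← mul_sub, abs_mul, abs_of_nonneg (hw j)]
  exact mul_le_mul_of_nonneg_left (by simpa using norm_le_pi_norm (x - y) j) (hw j)

theorem abs_bestResponse_sub_le {s : ι → ℝ} (hs : ∀ i, 0 < s i) {G : Matrix ι ι ℝ}
    (hG : ∀ i j, 0 ≤ G i j) (d : ι → ℝ) (x y : ι → ℝ) (i : ι) :
    |bestResponse d s G x i - bestResponse d s G y i| ≤ (∑ j, G i j) / s i * ‖x - y‖ := by
  unfold bestResponse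
  calc _ ≤ |(d i + ∑ j, G i j * x j) / s i - (d i + ∑ j, G i j * y j) / s i| := by
        rw [max_comm 0, max_comm 0]
        exact abs_max_sub_max_le_abs _ _ 0
    _ = |∑ j, G i j * x j - ∑ j, G i j * y j| / s i := by
        rw [← sub_div, abs_div, abs_of_pos (hs i), add_sub_add_left_eq_sub]
    _ ≤ (∑ j, G i j) * ‖x - y‖ / s i := by
        gcongr
        · exact (hs i).le
        · exact abs_weightedSum_sub_le (hG i) x y
    _ = _ := by ring

theorem lipschitzWith_bestResponse {s : ι → ℝ} (hs : ∀ i, 0 < s i) {G : Matrix ι ι ℝ}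
    (hG : ∀ i j, 0 ≤ G i j) (d : ι → ℝ) {K : ℝ≥0} (hK : ∀ i, (∑ j, G i j) / s i ≤ K) :
    LipschitzWith K (bestResponse d s G) := by
  refine LipschitzWith.of_dist_le_mul fun x y => (dist_pi_le_iff (by positivity)).2 fun i => ?_
  rw [Real.dist_eq, dist_eq_norm]
  exact (abs_bestResponse_sub_le hs hG d x y i).trans
    (mul_le_mul_of_nonneg_right (hK i) (norm_nonneg _))

end BestResponse

theorem stmt4_general (N : ℕ)
    (a b r : Fin N → ℝ) (c : ℝ) (hb : ∀ i, 0 < b i)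
    (G : Matrix (Fin N) (Fin N) ℝ)
    (hGnonneg : ∀ i j, 0 ≤ G i j)
    (hA : ∀ i, ∑ j, G i j < 2 * b i)
    (T : (Fin N → ℝ) → (Fin N → ℝ))
    (hT : ∀ x i, T x i = max 0 ((r i - c + a i + ∑ j, G i j * x j) / (2 * b i)))
    (xstar : Fin N → ℝ) (hfix : T xstar = xstar)
    (κ : ℝ) (hκ : κ = ⨆ i, (∑ j, G i j) / (2 * b i)) :
    κ < 1 ∧
    ∀ x0 : Fin N → ℝ,
      Filter.Tendsto (fun k => T^[k] x0) Filter.atTop (nhds xstar) ∧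
      ∀ k : ℕ, ‖T^[k] x0 - xstar‖ ≤ κ ^ k * ‖x0 - xstar‖ := by
  have hb2 : ∀ i, 0 < 2 * b i := fun i => by linarith [hb i]
  have hκ0 : 0 ≤ κ :=
    hκ ▸ Real.iSup_nonneg fun i => div_nonneg (sum_nonneg fun j _ => hGnonneg i j) (hb2 i).le
  have hκ1 : κ < 1 :=
    hκ ▸ Real.iSup_lt_of_forall_lt one_pos fun i => (div_lt_one (hb2 i)).2 (hA i)
  have hT_eq : T = bestResponse (fun i => r i - c + a i) (fun i => 2 * b i) G :=
    funext fun x => funext (hT x)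
  have hcontr : ContractingWith κ.toNNReal T := by
    rw [hT_eq]
    refine ⟨Real.toNNReal_lt_one.2 hκ1, lipschitzWith_bestResponse hb2 hGnonneg _ fun i => ?_⟩
    rw [Real.coe_toNNReal κ hκ0, hκ]
    exact le_ciSup (f := fun i => (∑ j, G i j) / (2 * b i)) (Finite.bddAbove_range _) i
  refine ⟨hκ1, fun x0 => ⟨?_, fun k => ?_⟩⟩
  · rw [hcontr.fixedPoint_unique hfix]
    exact hcontr.tendsto_iterate_fixedPoint x0
  · have h := (hcontr.2.iterate k).dist_le_mul x0 xstar
    rwa [Function.iterate_fixed hfix, dist_eq_norm, dist_eq_norm, NNReal.coe_pow,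
      Real.coe_toNNReal κ hκ0] at h

/-- Proposition 1: under Assumption 1, the simultaneous best-response iteration converges
from any starting point to the unique fixed point `x*` of `T`, geometrically with rate
`κ = max_i (Σ_j g_{ij}) / (2 bᵢ) < 1`. -/
theorem stmt4 (N : ℕ) (hN : 1 ≤ N)
    (a b r : Fin N → ℝ) (c : ℝ) (hb : ∀ i, 0 < b i)
    (G : Matrix (Fin N) (Fin N) ℝ)
    (hGsym : ∀ i j, G i j = G j i)
    (hGnonneg : ∀ i j, 0 ≤ G i j)
    (hGdiag : ∀ i, G i i = 0)
    (hA : ∀ i, ∑ j, G i j < 2 * b i)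
    (T : (Fin N → ℝ) → (Fin N → ℝ))
    (hT : ∀ x i, T x i = max 0 ((r i - c + a i + ∑ j, G i j * x j) / (2 * b i)))
    (xstar : Fin N → ℝ) (hfix : T xstar = xstar)
    (huniq : ∀ y : Fin N → ℝ, T y = y → y = xstar)
    (κ : ℝ) (hκ : κ = ⨆ i, (∑ j, G i j) / (2 * b i)) :
    κ < 1 ∧
    ∀ x0 : Fin N → ℝ,
      Filter.Tendsto (fun k => T^[k] x0) Filter.atTop (nhds xstar) ∧
      ∀ k : ℕ, ‖T^[k] x0 - xstar‖ ≤ κ ^ k * ‖x0 - xstar‖ :=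
  stmt4_general N a b r c hb G hGnonneg hA T hT xstar hfix κ hκ
end

section
/- Under Assumption 1, let x ∈ ℝ^N be any fixed point of the best-response map T with all coordinates nonnegative, and let i be an index attaining the largest coordinate of x (x_i = max_j x_j). Then x_i ≤ |r_i − c + a_i| / (2b_i − Σ_{j=1}^N g_{ij}). In particular ‖x‖_∞ ≤ max_i |r_i − c + a_i| / (2b_i − Σ_{j=1}^N g_{ij}). -/
/-!
At a maximal coordinate `xᵢ > 0` the fixed-point equation reads
`2 bᵢ xᵢ = rᵢ − c + aᵢ + Σⱼ gᵢⱼ xⱼ`, and since the ties are nonnegative the social term is at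
most `(Σⱼ gᵢⱼ) xᵢ`. Hence `(2 bᵢ − Σⱼ gᵢⱼ) xᵢ ≤ rᵢ − c + aᵢ`, where Assumption 1 makes the
factor positive. Fixed points of `T` are nonnegative, so their sup norm is their largest
coordinate.
-/

open Finset

lemma sum_mul_le_sum_mul_of_le_apply {ι : Type*} [Fintype ι] {w x : ι → ℝ} {i : ι}
    (hw : ∀ j, 0 ≤ w j) (hi : ∀ j, x j ≤ x i) :
    ∑ j, w j * x j ≤ (∑ j, w j) * x i := by
  rw [sum_mul]
  exact sum_le_sum fun j _ => mul_le_mul_of_nonneg_left (hi j) (hw j)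

lemma le_abs_div_sub_of_eq_max_zero {x d s β σ : ℝ} (hσ : 0 ≤ σ) (hσβ : σ < β)
    (hs : s ≤ σ * x) (hx : x = max 0 ((d + s) / β)) :
    x ≤ |d| / (β - σ) := by
  have hβσ : 0 < β - σ := sub_pos.mpr hσβ
  rcases max_cases 0 ((d + s) / β) with ⟨hmax, -⟩ | ⟨hmax, -⟩
  · rw [hx, hmax]
    positivity
  · have hβx : β * x = d + s := by
      rw [hx, hmax, mul_div_cancel₀ _ (hσ.trans_lt hσβ).ne']
    rw [le_div_iff₀ hβσ]
    nlinarith [le_abs_self d]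

lemma norm_le_apply_of_forall_le {ι : Type*} [Fintype ι] {x : ι → ℝ} {i : ι}
    (hx : ∀ j, 0 ≤ x j) (hi : ∀ j, x j ≤ x i) : ‖x‖ ≤ x i :=
  (pi_norm_le_iff_of_nonneg (hx i)).mpr fun j => by
    rw [Real.norm_of_nonneg (hx j)]
    exact hi j

theorem stmt5_general (N : ℕ)
    (a b r : Fin N → ℝ) (c : ℝ)
    (G : Matrix (Fin N) (Fin N) ℝ)
    (hGnonneg : ∀ i j, 0 ≤ G i j)
    (hA : ∀ i, ∑ j, G i j < 2 * b i)
    (x : Fin N → ℝ)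
    (hfix : ∀ i, x i = max 0 ((r i - c + a i + ∑ j, G i j * x j) / (2 * b i)))
    (i : Fin N) (hi : ∀ j, x j ≤ x i) :
    x i ≤ |r i - c + a i| / (2 * b i - ∑ j, G i j) ∧
    ‖x‖ ≤ ⨆ i', |r i' - c + a i'| / (2 * b i' - ∑ j, G i' j) := by
  have hxnn : ∀ j, 0 ≤ x j := fun j => (hfix j).symm ▸ le_max_left _ _
  have hbound : x i ≤ |r i - c + a i| / (2 * b i - ∑ j, G i j) :=
    le_abs_div_sub_of_eq_max_zero (sum_nonneg fun j _ => hGnonneg i j) (hA i)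
      (sum_mul_le_sum_mul_of_le_apply (hGnonneg i) hi) (hfix i)
  have hsup := le_ciSup
    (Finite.bddAbove_range fun i' => |r i' - c + a i'| / (2 * b i' - ∑ j, G i' j)) i
  exact ⟨hbound, (norm_le_apply_of_forall_le hxnn hi).trans (hbound.trans hsup)⟩

/-- Bound on any nonnegative fixed point of the best-response map: the largest coordinate
`xᵢ` satisfies `xᵢ ≤ |rᵢ − c + aᵢ| / (2 bᵢ − Σ_j g_{ij})`, and hence the sup norm of `x`
is at most `max_i |rᵢ − c + aᵢ| / (2 bᵢ − Σ_j g_{ij})`. -/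
theorem stmt5 (N : ℕ) (hN : 1 ≤ N)
    (a b r : Fin N → ℝ) (c : ℝ) (hb : ∀ i, 0 < b i)
    (G : Matrix (Fin N) (Fin N) ℝ)
    (hGsym : ∀ i j, G i j = G j i)
    (hGnonneg : ∀ i j, 0 ≤ G i j)
    (hGdiag : ∀ i, G i i = 0)
    (hA : ∀ i, ∑ j, G i j < 2 * b i)
    (x : Fin N → ℝ)
    (hfix : ∀ i, x i = max 0 ((r i - c + a i + ∑ j, G i j * x j) / (2 * b i)))
    (hxnn : ∀ j, 0 ≤ x j)
    (i : Fin N) (hi : ∀ j, x j ≤ x i) :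
    x i ≤ |r i - c + a i| / (2 * b i - ∑ j, G i j) ∧
    ‖x‖ ≤ ⨆ i', |r i' - c + a i'| / (2 * b i' - ∑ j, G i' j) :=
  stmt5_general N a b r c G hGnonneg hA x hfix i hi
end

section
/- Under Assumption 1 and with μ > 0, t > 0, s > 0, the CSP's discriminatory-reward revenue function Π : ℝ^N → ℝ, Π(r) = μ(s·1ᵀx − t·xᵀx) − rᵀx with x = K(a + r − c·1) and K = (B − G)^{-1}, is a strictly concave function of r. -/
/-!
Write `w = a - c·1`, so that `x = K (w + r)`. Then
`Π(r) = μ (s·1ᵀx - t·xᵀx) - (K w)ᵀr - rᵀK r`: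
a concave function of `x` composed with an affine map, minus a linear function, minus the
quadratic form of `K`. That form is strictly convex because `K = (B - G)⁻¹` is positive definite:
as `G ≥ 0` is symmetric, `2 z_i z_j ≤ z_i² + z_j²` gives `zᵀG z ≤ Σ_i (Σ_j g_ij) z_i²`, hence
`zᵀ(B - G) z ≥ Σ_i (2 b_i - Σ_j g_ij) z_i² > 0` for `z ≠ 0`.
-/

open Matrix Set

namespace Matrix

variable {n : Type*} [Fintype n]

theorem dotProduct_mulVec_smul_add_smul (M : Matrix n n ℝ) (x y : n → ℝ) {p q : ℝ}
    (hpq : p + q = 1) :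
    (p • x + q • y) ⬝ᵥ M *ᵥ (p • x + q • y) =
      p * (x ⬝ᵥ M *ᵥ x) + q * (y ⬝ᵥ M *ᵥ y) - p * q * ((x - y) ⬝ᵥ M *ᵥ (x - y)) := by
  obtain rfl : q = 1 - p := by linarith
  simp only [mulVec_add, mulVec_sub, mulVec_smul, dotProduct_add, add_dotProduct, dotProduct_sub,
    sub_dotProduct, dotProduct_smul, smul_dotProduct, smul_eq_mul]
  ring

theorem PosDef.strictConvexOn_dotProduct_mulVec {M : Matrix n n ℝ} (hM : M.PosDef) :
    StrictConvexOn ℝ univ fun x => x ⬝ᵥ M *ᵥ x := by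
  refine ⟨convex_univ, fun x _ y _ hxy p q hp hq hpq => ?_⟩
  have hpos : 0 < (x - y) ⬝ᵥ M *ᵥ (x - y) := by
    simpa using hM.dotProduct_mulVec_pos (sub_ne_zero.2 hxy)
  have hgap := mul_pos (mul_pos hp hq) hpos
  simp only [smul_eq_mul, dotProduct_mulVec_smul_add_smul M x y hpq]
  linarith

theorem IsSymm.dotProduct_mulVec_le_sum_mul_sq {G : Matrix n n ℝ} (hG : G.IsSymm)
    (hG0 : ∀ i j, 0 ≤ G i j) (z : n → ℝ) :
    z ⬝ᵥ G *ᵥ z ≤ ∑ i, (∑ j, G i j) * z i ^ 2 := by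
  have hquad : z ⬝ᵥ G *ᵥ z = ∑ i, ∑ j, G i j * (z i * z j) := by
    simp only [dotProduct, mulVec, Finset.mul_sum]
    exact Finset.sum_congr rfl fun i _ => Finset.sum_congr rfl fun j _ => by ring
  have hswap : ∑ i, ∑ j, G i j * z j ^ 2 = ∑ i, ∑ j, G i j * z i ^ 2 := by
    rw [Finset.sum_comm]
    exact Finset.sum_congr rfl fun i _ => Finset.sum_congr rfl fun j _ => by rw [hG.apply]
  have hamgm : ∑ i, ∑ j, G i j * (2 * z i * z j) ≤ ∑ i, ∑ j, G i j * (z i ^ 2 + z j ^ 2) :=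
    Finset.sum_le_sum fun i _ => Finset.sum_le_sum fun j _ =>
      mul_le_mul_of_nonneg_left (two_mul_le_add_sq _ _) (hG0 i j)
  have hdouble : ∑ i, ∑ j, G i j * (2 * z i * z j) = 2 * ∑ i, ∑ j, G i j * (z i * z j) := by
    simp only [Finset.mul_sum]
    exact Finset.sum_congr rfl fun i _ => Finset.sum_congr rfl fun j _ => by ring
  simp only [mul_add, Finset.sum_add_distrib, hswap] at hamgm
  simp only [Finset.sum_mul, hquad]
  linarith

theorem posDef_diagonal_sub_of_sum_lt [DecidableEq n] {d : n → ℝ} {G : Matrix n n ℝ} (hG : G.IsSymm)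
    (hG0 : ∀ i j, 0 ≤ G i j) (hd : ∀ i, ∑ j, G i j < d i) : (diagonal d - G).PosDef := by
  refine posDef_iff_dotProduct_mulVec.2
    ⟨(isHermitian_diagonal d).sub (isHermitian_iff_isSymm.2 hG), fun z hz => ?_⟩
  obtain ⟨k, hk⟩ := Function.ne_iff.1 hz
  have hdiag : z ⬝ᵥ diagonal d *ᵥ z = ∑ i, d i * z i ^ 2 := by
    simp only [dotProduct, mulVec_diagonal]
    exact Finset.sum_congr rfl fun i _ => by ring
  have hlt : ∑ i, (∑ j, G i j) * z i ^ 2 < ∑ i, d i * z i ^ 2 :=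
    Finset.sum_lt_sum (fun i _ => mul_le_mul_of_nonneg_right (hd i).le (sq_nonneg _))
      ⟨k, Finset.mem_univ k, mul_lt_mul_of_pos_right (hd k) (sq_pos_of_ne_zero hk)⟩
  rw [star_trivial, sub_mulVec, dotProduct_sub, hdiag]
  linarith [hG.dotProduct_mulVec_le_sum_mul_sq hG0 z]

end Matrix

section

variable {n : Type*} [Fintype n]

theorem concaveOn_dotProduct (v : n → ℝ) : ConcaveOn ℝ univ (v ⬝ᵥ ·) :=
  LinearMap.concaveOn (dotProductBilin ℝ ℝ v) convex_univ

theorem convexOn_dotProduct (v : n → ℝ) : ConvexOn ℝ univ (v ⬝ᵥ ·) :=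
  LinearMap.convexOn (dotProductBilin ℝ ℝ v) convex_univ

theorem concaveOn_mul_sum_sub_mul_sum_sq {μ t : ℝ} (hμ : 0 ≤ μ) (ht : 0 ≤ t) (s : ℝ) :
    ConcaveOn ℝ univ fun y : n → ℝ => μ * (s * ∑ i, y i - t * ∑ i, y i ^ 2) := by
  have hsq : ConvexOn ℝ univ fun y : n → ℝ => ∑ i, y i ^ 2 := by
    classical
    simpa [dotProduct, sq] using
      (PosDef.one (n := n) (R := ℝ)).strictConvexOn_dotProduct_mulVec.convexOn
  simpa [dotProduct, Finset.mul_sum] using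
    ((concaveOn_dotProduct fun _ => s).sub (hsq.smul ht)).smul hμ

end

theorem stmt7_general (N : ℕ)
    (a b : Fin N → ℝ) (c : ℝ)
    (G : Matrix (Fin N) (Fin N) ℝ)
    (hGsym : ∀ i j, G i j = G j i)
    (hGnonneg : ∀ i j, 0 ≤ G i j)
    (hA : ∀ i, ∑ j, G i j < 2 * b i)
    (B : Matrix (Fin N) (Fin N) ℝ)
    (hB : B = Matrix.diagonal (fun i => 2 * b i))
    (μ s t : ℝ) (hμ : 0 < μ) (ht : 0 < t)
    (K : Matrix (Fin N) (Fin N) ℝ) (hK : K = (B - G)⁻¹)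
    (Rev : (Fin N → ℝ) → ℝ)
    (hRev : ∀ r : Fin N → ℝ,
      Rev r = μ * (s * ∑ i, (K *ᵥ (fun j => a j + r j - c)) i
                  - t * ∑ i, ((K *ᵥ (fun j => a j + r j - c)) i) ^ 2)
              - ∑ i, r i * (K *ᵥ (fun j => a j + r j - c)) i) :
    StrictConcaveOn ℝ Set.univ Rev := by
  have hKpd : K.PosDef := by
    rw [hK, hB]
    exact (posDef_diagonal_sub_of_sum_lt (IsSymm.ext fun i j => hGsym j i) hGnonneg hA).inv
  set w : Fin N → ℝ := fun j => a j - c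
  have hdecomp : Rev = (fun r => μ * (s * ∑ i, (K *ᵥ (w + r)) i - t * ∑ i, (K *ᵥ (w + r)) i ^ 2)
      - K *ᵥ w ⬝ᵥ r) - fun r => r ⬝ᵥ K *ᵥ r := by
    funext r
    have hx : (fun j => a j + r j - c) = w + r :=
      funext fun j => by simp only [w, Pi.add_apply]; ring
    rw [hRev, hx, Pi.sub_apply, sub_sub, dotProduct_comm (K *ᵥ w), ← dotProduct_add,
      ← mulVec_add]
    rfl
  rw [hdecomp]
  refine ConcaveOn.sub_strictConvexOn ?_ hKpd.strictConvexOn_dotProduct_mulVec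
  exact (((concaveOn_mul_sum_sub_mul_sum_sq hμ.le ht.le s).comp_linearMap
    K.mulVecLin).translate_right w).sub (convexOn_dotProduct (K *ᵥ w))

/-- Under Assumption 1, with `μ, t, s > 0`, the CSP's discriminatory-reward revenue
`Π(r) = μ (s·1ᵀx − t·xᵀx) − rᵀx`, with `x = K (a + r − c·1)` and `K = (B − G)⁻¹`,
is a strictly concave function of `r`. -/
theorem stmt7 (N : ℕ) (hN : 1 ≤ N)
    (a b : Fin N → ℝ) (c : ℝ) (hb : ∀ i, 0 < b i)
    (G : Matrix (Fin N) (Fin N) ℝ)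
    (hGsym : ∀ i j, G i j = G j i)
    (hGnonneg : ∀ i j, 0 ≤ G i j)
    (hGdiag : ∀ i, G i i = 0)
    (hA : ∀ i, ∑ j, G i j < 2 * b i)
    (B : Matrix (Fin N) (Fin N) ℝ)
    (hB : B = Matrix.diagonal (fun i => 2 * b i))
    (μ s t : ℝ) (hμ : 0 < μ) (hs : 0 < s) (ht : 0 < t)
    (K : Matrix (Fin N) (Fin N) ℝ) (hK : K = (B - G)⁻¹)
    (Rev : (Fin N → ℝ) → ℝ)
    (hRev : ∀ r : Fin N → ℝ,
      Rev r = μ * (s * ∑ i, (K *ᵥ (fun j => a j + r j - c)) i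
                  - t * ∑ i, ((K *ᵥ (fun j => a j + r j - c)) i) ^ 2)
              - ∑ i, r i * (K *ᵥ (fun j => a j + r j - c)) i) :
    StrictConcaveOn ℝ Set.univ Rev :=
  stmt7_general N a b c G hGsym hGnonneg hA B hB μ s t hμ ht K hK Rev hRev
end

section
/- The map X ↦ 1ᵀX^{-1}1 is convex on the set of symmetric positive definite N×N real matrices: for all symmetric positive definite D, E ∈ ℝ^{N×N} and all β ∈ [0, 1], the matrix βD + (1−β)E is symmetric positive definite and 1ᵀ(βD + (1−β)E)^{-1}1 ≤ β·1ᵀD^{-1}1 + (1−β)·1ᵀE^{-1}1. -/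
/-!
For positive definite `X`, completing the square gives
`a ⬝ᵥ X⁻¹ *ᵥ a = max_v (2 a ⬝ᵥ v - v ⬝ᵥ X *ᵥ v)`, the maximum being attained at `v = X⁻¹ *ᵥ a`.
A pointwise supremum of functions affine in `X` is convex; concretely, evaluating both
sides at the maximiser `v` for `β • D + (1 - β) • E` gives the inequality.
-/

open scoped Matrix ComplexOrder

namespace Matrix

variable {n : Type*}

lemma convex_setOf_posDef {𝕜 : Type*} [RCLike 𝕜] :
    Convex ℝ {X : Matrix n n 𝕜 | X.PosDef} := by
  intro D hD E hE s t hs ht hst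
  rcases hs.lt_or_eq with hs | rfl
  · exact (hD.smul hs).add_posSemidef (hE.posSemidef.smul ht)
  · rw [zero_add] at hst
    subst hst
    simpa using hE

variable [Fintype n]

lemma IsSymm.dotProduct_mulVec_comm {R : Type*} [CommSemiring R] {X : Matrix n n R}
    (hX : X.IsSymm) (v w : n → R) : v ⬝ᵥ X *ᵥ w = w ⬝ᵥ X *ᵥ v := by
  rw [dotProduct_mulVec, ← mulVec_transpose, hX.eq, dotProduct_comm]

lemma PosSemidef.two_mul_dotProduct_mulVec_sub_le {X : Matrix n n ℝ} (hX : X.PosSemidef)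
    (v w : n → ℝ) : 2 * (v ⬝ᵥ X *ᵥ w) - v ⬝ᵥ X *ᵥ v ≤ w ⬝ᵥ X *ᵥ w := by
  have hsq : 0 ≤ (v - w) ⬝ᵥ X *ᵥ (v - w) := by
    simpa using hX.dotProduct_mulVec_nonneg (v - w)
  have hsymm := (isHermitian_iff_isSymm.1 hX.isHermitian).dotProduct_mulVec_comm v w
  simp only [mulVec_sub, dotProduct_sub, sub_dotProduct] at hsq
  linarith

variable [DecidableEq n]

lemma PosDef.mulVec_inv_mulVec {𝕜 : Type*} [RCLike 𝕜] {X : Matrix n n 𝕜} (hX : X.PosDef)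
    (a : n → 𝕜) : X *ᵥ (X⁻¹ *ᵥ a) = a := by
  rw [mulVec_mulVec, mul_nonsing_inv X ((isUnit_iff_isUnit_det X).1 hX.isUnit), one_mulVec]

lemma PosDef.two_mul_dotProduct_sub_le_dotProduct_inv_mulVec {X : Matrix n n ℝ} (hX : X.PosDef)
    (a v : n → ℝ) : 2 * (a ⬝ᵥ v) - v ⬝ᵥ X *ᵥ v ≤ a ⬝ᵥ X⁻¹ *ᵥ a := by
  have h := hX.posSemidef.two_mul_dotProduct_mulVec_sub_le v (X⁻¹ *ᵥ a)
  rwa [hX.mulVec_inv_mulVec, dotProduct_comm v, dotProduct_comm (X⁻¹ *ᵥ a)] at h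

lemma convexOn_dotProduct_inv_mulVec (a : n → ℝ) :
    ConvexOn ℝ {X : Matrix n n ℝ | X.PosDef} (fun X => a ⬝ᵥ X⁻¹ *ᵥ a) := by
  refine ⟨convex_setOf_posDef, fun D hD E hE s t hs ht hst => ?_⟩
  have hF : (s • D + t • E).PosDef := convex_setOf_posDef hD hE hs ht hst
  set v := (s • D + t • E)⁻¹ *ᵥ a
  have hquad : v ⬝ᵥ (s • D + t • E) *ᵥ v = s * (v ⬝ᵥ D *ᵥ v) + t * (v ⬝ᵥ E *ᵥ v) := by
    simp only [add_mulVec, smul_mulVec, dotProduct_add, dotProduct_smul, smul_eq_mul]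
  have hDv := hD.two_mul_dotProduct_sub_le_dotProduct_inv_mulVec a v
  have hEv := hE.two_mul_dotProduct_sub_le_dotProduct_inv_mulVec a v
  simp only [smul_eq_mul]
  calc a ⬝ᵥ (s • D + t • E)⁻¹ *ᵥ a = 2 * (a ⬝ᵥ v) - v ⬝ᵥ (s • D + t • E) *ᵥ v := by
        rw [hF.mulVec_inv_mulVec, dotProduct_comm v]
        ring
    _ = s * (2 * (a ⬝ᵥ v) - v ⬝ᵥ D *ᵥ v) + t * (2 * (a ⬝ᵥ v) - v ⬝ᵥ E *ᵥ v) := by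
        rw [hquad]
        linear_combination (-2 * (a ⬝ᵥ v)) * hst
    _ ≤ s * (a ⬝ᵥ D⁻¹ *ᵥ a) + t * (a ⬝ᵥ E⁻¹ *ᵥ a) := by gcongr

end Matrix

open Matrix

theorem stmt11_general (N : ℕ)
    (D E : Matrix (Fin N) (Fin N) ℝ) (hD : D.PosDef) (hE : E.PosDef)
    (β : ℝ) (hβ0 : 0 ≤ β) (hβ1 : β ≤ 1)
    (ones : Fin N → ℝ) :
    (β • D + (1 - β) • E).PosDef ∧
    ones ⬝ᵥ ((β • D + (1 - β) • E)⁻¹ *ᵥ ones)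
      ≤ β * (ones ⬝ᵥ (D⁻¹ *ᵥ ones)) + (1 - β) * (ones ⬝ᵥ (E⁻¹ *ᵥ ones)) :=
  ⟨convex_setOf_posDef hD hE hβ0 (sub_nonneg.2 hβ1) (add_sub_cancel β 1),
    (convexOn_dotProduct_inv_mulVec ones).2 hD hE hβ0 (sub_nonneg.2 hβ1) (add_sub_cancel β 1)⟩

/-- The map `X ↦ 1ᵀ X⁻¹ 1` is convex on symmetric positive definite matrices:
for PD `D, E` and `β ∈ [0,1]`, `βD + (1−β)E` is PD and
`1ᵀ(βD + (1−β)E)⁻¹1 ≤ β·1ᵀD⁻¹1 + (1−β)·1ᵀE⁻¹1`. -/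
theorem stmt11 (N : ℕ) (hN : 1 ≤ N)
    (D E : Matrix (Fin N) (Fin N) ℝ) (hD : D.PosDef) (hE : E.PosDef)
    (β : ℝ) (hβ0 : 0 ≤ β) (hβ1 : β ≤ 1)
    (ones : Fin N → ℝ) (hones : ones = fun _ => 1) :
    (β • D + (1 - β) • E).PosDef ∧
    ones ⬝ᵥ ((β • D + (1 - β) • E)⁻¹ *ᵥ ones)
      ≤ β * (ones ⬝ᵥ (D⁻¹ *ᵥ ones)) + (1 - β) * (ones ⬝ᵥ (E⁻¹ *ᵥ ones)) :=
  stmt11_general N D E hD hE β hβ0 hβ1 ones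
end

section
/- (Average-reward identity, Eq. (9)) Under Assumption 1 and with μ > 0, t > 0, s > 0, and homogeneous intrinsic value a_i = ā for all i (ā ∈ ℝ), the average of the optimal discriminatory rewards satisfies (1/N)·1ᵀ(2I + 2μtK)^{-1}{ μ[s·1 − 2tK(ā − c)·1] − (ā − c)·1 } = (c − ā)/2 + μs/2 − (μt/N)(μs + ā − c)·1ᵀ[2(B − G) + 2μtI]^{-1}1, where K = (B − G)^{-1}. -/
open scoped Matrix

/-!
Since `K = (B - G)⁻¹`, the matrix `2I + 2μtK` factors as `K · P` with `P = 2(B - G) + 2μtI`,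
so its inverse is `P⁻¹ (B - G) = ½ I - μt P⁻¹`. The vector in braces equals
`(μs + ā - c)·1 - (ā - c)(2I + 2μtK)·1`, and the identity follows by summing coordinates.
Both `B - G` and `P` are invertible because they are strictly diagonally dominant.
-/

namespace Matrix

variable {n : Type*} [DecidableEq n]

theorem smul_diagonal_sub_add_smul_one {α : Type*} [Ring α] (a r : α) (e : n → α)
    (G : Matrix n n α) :
    a • (diagonal e - G) + r • (1 : Matrix n n α) =
      diagonal (fun i => a * e i + r) - a • G := by
  rw [smul_one_eq_diagonal, smul_sub, ← diagonal_smul, sub_add_eq_add_sub, diagonal_add]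
  rfl

variable [Fintype n]

theorem isUnit_det_diagonal_sub {e : n → ℝ} {G : Matrix n n ℝ}
    (hG : ∀ i j, 0 ≤ G i j) (he : ∀ i, ∑ j, G i j < e i) :
    IsUnit (diagonal e - G).det := by
  refine isUnit_iff_ne_zero.mpr (det_ne_zero_of_sum_row_lt_diag fun k => ?_)
  have h_off : ∀ j ∈ Finset.univ.erase k, ‖(diagonal e - G) k j‖ = G k j := fun j hj => by
    simp [diagonal_apply_ne _ (Finset.ne_of_mem_erase hj).symm, abs_of_nonneg (hG k j)]
  rw [Finset.sum_congr rfl h_off, Finset.sum_erase_eq_sub (Finset.mem_univ k)]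
  simp only [sub_apply, diagonal_apply_eq, Real.norm_eq_abs]
  linarith [he k, le_abs_self (e k - G k k)]

section Resolvent

variable {𝕜 : Type*} [Field 𝕜] {M : Matrix n n 𝕜}

theorem smul_one_add_smul_inv_eq_inv_mul (hM : IsUnit M.det) (a r : 𝕜) :
    a • 1 + (a * r) • M⁻¹ = M⁻¹ * (a • M + (a * r) • 1) := by
  rw [Matrix.mul_add, Matrix.mul_smul, Matrix.mul_smul, nonsing_inv_mul M hM, Matrix.mul_one]

theorem isUnit_det_smul_one_add_smul_inv (hM : IsUnit M.det) {a r : 𝕜}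
    (hP : IsUnit (a • M + (a * r) • 1).det) :
    IsUnit (a • 1 + (a * r) • M⁻¹).det := by
  rw [smul_one_add_smul_inv_eq_inv_mul hM, det_mul]
  exact (isUnit_nonsing_inv_det M hM).mul hP

theorem inv_smul_one_add_smul_inv (hM : IsUnit M.det) {a r : 𝕜} (ha : a ≠ 0)
    (hP : IsUnit (a • M + (a * r) • 1).det) :
    (a • 1 + (a * r) • M⁻¹)⁻¹ = a⁻¹ • 1 - r • (a • M + (a * r) • 1)⁻¹ := by
  rw [smul_one_add_smul_inv_eq_inv_mul hM, mul_inv_rev, nonsing_inv_nonsing_inv M hM]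
  set P := a • M + (a * r) • (1 : Matrix n n 𝕜)
  have hMP : M = a⁻¹ • P - r • 1 := by
    simp only [P, smul_add, smul_smul, inv_mul_cancel₀ ha, one_smul, inv_mul_cancel_left₀ ha]
    abel
  calc P⁻¹ * M = P⁻¹ * (a⁻¹ • P - r • 1) := congrArg _ hMP
    _ = a⁻¹ • 1 - r • P⁻¹ := by
      rw [Matrix.mul_sub, Matrix.mul_smul, Matrix.mul_smul, nonsing_inv_mul P hP, Matrix.mul_one]

end Resolvent

end Matrix

open Matrix in
theorem stmt13_general (N : ℕ) (hN : 1 ≤ N)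
    (b : Fin N → ℝ)
    (abar c μ s t : ℝ) (hμ : 0 < μ) (ht : 0 < t)
    (G : Matrix (Fin N) (Fin N) ℝ)
    (hGnonneg : ∀ i j, 0 ≤ G i j)
    (hA : ∀ i, ∑ j, G i j < 2 * b i)
    (B : Matrix (Fin N) (Fin N) ℝ)
    (hB : B = Matrix.diagonal (fun i => 2 * b i))
    (K : Matrix (Fin N) (Fin N) ℝ) (hK : K = (B - G)⁻¹)
    (ones : Fin N → ℝ) (hones : ones = fun _ => 1) :
    (1 / (N : ℝ)) * (ones ⬝ᵥ
        (((2 : ℝ) • (1 : Matrix (Fin N) (Fin N) ℝ) + (2 * μ * t) • K)⁻¹ *ᵥ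
          (fun i => μ * (s - 2 * t * ((abar - c) * (K *ᵥ ones) i)) - (abar - c))))
      = (c - abar) / 2 + μ * s / 2
        - (μ * t / (N : ℝ)) * (μ * s + abar - c) *
          (ones ⬝ᵥ
            (((2 : ℝ) • (B - G) + (2 * μ * t) • (1 : Matrix (Fin N) (Fin N) ℝ))⁻¹ *ᵥ ones)) := by
  obtain rfl : ones = 1 := hones
  subst hK hB
  rw [show (2 : ℝ) * μ * t = 2 * (μ * t) by ring]
  set M := diagonal (fun i => 2 * b i) - G
  set A := (2 : ℝ) • (1 : Matrix (Fin N) (Fin N) ℝ) + (2 * (μ * t)) • M⁻¹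
  set P := (2 : ℝ) • M + (2 * (μ * t)) • (1 : Matrix (Fin N) (Fin N) ℝ)
  have hM : IsUnit M.det := isUnit_det_diagonal_sub hGnonneg hA
  have hP : IsUnit P.det := by
    rw [show P = _ from smul_diagonal_sub_add_smul_one _ _ _ _]
    refine isUnit_det_diagonal_sub (fun i j => by simpa using hGnonneg i j) fun i => ?_
    simp only [Matrix.smul_apply, smul_eq_mul, ← Finset.mul_sum]
    nlinarith [hA i, mul_pos hμ ht]
  have hAinv : A⁻¹ = (2 : ℝ)⁻¹ • 1 - (μ * t) • P⁻¹ :=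
    inv_smul_one_add_smul_inv hM two_ne_zero hP
  have hAA : A⁻¹ *ᵥ (A *ᵥ 1) = 1 := by
    rw [mulVec_mulVec, nonsing_inv_mul A (isUnit_det_smul_one_add_smul_inv hM hP), one_mulVec]
  have hv : (fun i => μ * (s - 2 * t * ((abar - c) * (M⁻¹ *ᵥ 1) i)) - (abar - c))
      = (μ * s + abar - c) • 1 - (abar - c) • (A *ᵥ 1) := by
    funext i
    simp only [A, add_mulVec, smul_mulVec, one_mulVec, Pi.add_apply, Pi.sub_apply,
      Pi.smul_apply, Pi.one_apply, smul_eq_mul]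
    ring
  have hN0 : (N : ℝ) ≠ 0 := Nat.cast_ne_zero.mpr (by omega)
  rw [hv, mulVec_sub, mulVec_smul, mulVec_smul, hAA, hAinv, sub_mulVec, smul_mulVec, smul_mulVec,
    one_mulVec]
  simp only [dotProduct_sub, dotProduct_smul, one_dotProduct_one, Fintype.card_fin, smul_eq_mul]
  field_simp
  ring

/-- Average-reward identity (Eq. (9)): with homogeneous intrinsic value `a_i = ā`,
`(1/N)·1ᵀ(2I + 2μtK)⁻¹{ μ[s·1 − 2tK(ā − c)·1] − (ā − c)·1 }
  = (c − ā)/2 + μs/2 − (μt/N)(μs + ā − c)·1ᵀ[2(B − G) + 2μtI]⁻¹1`. -/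
theorem stmt13 (N : ℕ) (hN : 1 ≤ N)
    (b : Fin N → ℝ) (hb : ∀ i, 0 < b i)
    (abar c μ s t : ℝ) (hμ : 0 < μ) (hs : 0 < s) (ht : 0 < t)
    (G : Matrix (Fin N) (Fin N) ℝ)
    (hGsym : ∀ i j, G i j = G j i)
    (hGnonneg : ∀ i j, 0 ≤ G i j)
    (hGdiag : ∀ i, G i i = 0)
    (hA : ∀ i, ∑ j, G i j < 2 * b i)
    (B : Matrix (Fin N) (Fin N) ℝ)
    (hB : B = Matrix.diagonal (fun i => 2 * b i))
    (K : Matrix (Fin N) (Fin N) ℝ) (hK : K = (B - G)⁻¹)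
    (ones : Fin N → ℝ) (hones : ones = fun _ => 1) :
    (1 / (N : ℝ)) * (ones ⬝ᵥ
        (((2 : ℝ) • (1 : Matrix (Fin N) (Fin N) ℝ) + (2 * μ * t) • K)⁻¹ *ᵥ
          (fun i => μ * (s - 2 * t * ((abar - c) * (K *ᵥ ones) i)) - (abar - c))))
      = (c - abar) / 2 + μ * s / 2
        - (μ * t / (N : ℝ)) * (μ * s + abar - c) *
          (ones ⬝ᵥ
            (((2 : ℝ) • (B - G) + (2 * μ * t) • (1 : Matrix (Fin N) (Fin N) ℝ))⁻¹ *ᵥ ones)) :=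
  stmt13_general N hN b abar c μ s t hμ ht G hGnonneg hA B hB K hK ones hones
end
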